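/- Let K be a finite field with q elements and let L be a field extension of K of degree n, with n ≥ 4 and r ≥ 2 such that r·n is even. Suppose there exists a 1-scattered K-subspace of K-dimension r·n/2 in some r-dimensional L-vector space. Then every (r(n−2)/2)-dimensional L-vector space contains an (n−3)-scattered K-subspace of K-dimension r·n/2, attaining the bound (r(n−2)/2)·n/(n−2) = rn/2. -/

import Mathlib

/-!
Let `H = Hom_K(U₀, L)`, an `L`-space of dimension `rn/2`, and let `E ≤ H` be the image of
`Dual L V₀` under restriction to `U₀` (dimension `r`, as `U₀` spans `V₀`). Identify `V` with
`H / E` and take `U` to be the image of the `K`-valued forms `Hom_K(U₀, K)`, i.e. the Delsarte dual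
of `U₀`.

If `n - 2` `K`-independent vectors of `U` lay in an `(n - 3)`-dimensional `L`-subspace, a nonzero
`L`-combination of `n - 2` `K`-valued forms would be the restriction of a form `λ ≠ 0`, so `λ(U₀)`
would lie in a `K`-subspace `A` of `L` of dimension at most `n - 2`. As `U₀` is `1`-scattered of
half dimension, `U₀ ∩ α⁻¹U₀ = 0` and hence `U₀ + α⁻¹U₀ = V₀` for every `α ∉ K`, so
`L = λ(V₀) ⊆ A + α⁻¹A`. Counting the pairs `(α, x)` with `x, αx ∈ A` shows that this fails for
some `α ∉ K`.
-/

def IsHScattered (K L V : Type*) [Field K] [Field L] [Algebra K L]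
    [AddCommGroup V] [Module L V] [Module K V] [IsScalarTower K L V]
    (h : ℕ) (U : Submodule K V) : Prop :=
  Submodule.span L (U : Set V) = ⊤ ∧
  ∀ S : Submodule L V, Module.finrank L S = h →
    Module.finrank K ↥(U ⊓ S.restrictScalars K) ≤ h

open Module Finset

section SMulComap

variable {K L V : Type*} [Field K] [Field L] [Algebra K L]
  [AddCommGroup V] [Module L V] [Module K V] [IsScalarTower K L V]

theorem finrank_comap_smul (U : Submodule K V) {α : L} (hα : α ≠ 0) :
    finrank K (U.comap (α • LinearMap.id)) = finrank K U := by
  have : (α • LinearMap.id : V →ₗ[K] V) =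
      (DistribMulAction.toLinearEquiv K V (Units.mk0 α hα)).toLinearMap := rfl
  rw [this, Submodule.comap_equiv_eq_map_symm, LinearEquiv.finrank_map_eq]

theorem linearIndependent_pair_smul {u : V} (hu : u ≠ 0) {α : L}
    (hα : α ∉ Set.range (algebraMap K L)) : LinearIndependent K ![u, α • u] := by
  rw [LinearIndependent.pair_iff' hu]
  intro c hc
  rw [← algebraMap_smul L, ← sub_eq_zero, ← sub_smul] at hc
  exact hα ⟨c, sub_eq_zero.mp ((smul_eq_zero.mp hc).resolve_right hu)⟩

theorem finrank_inf_restrictScalars_le [FiniteDimensional L V] {U : Submodule K V} {h : ℕ}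
    (hU : ∀ v : Fin (h + 1) → V, (∀ i, v i ∈ U) → LinearIndependent K v → LinearIndependent L v)
    (S : Submodule L V) (hS : finrank L S = h) : finrank K ↥(U ⊓ S.restrictScalars K) ≤ h := by
  by_contra! hlt
  obtain ⟨v, hv⟩ := exists_linearIndependent_of_le_finrank (Nat.succ_le_of_lt hlt)
  have hLI := hU (fun i => v i) (fun i => (v i).2.1) (hv.map' _ (Submodule.ker_subtype _))
  have hle : Submodule.span L (Set.range fun i => (v i : V)) ≤ S :=
    Submodule.span_le.mpr (Set.range_subset_iff.mpr fun i => (v i).2.2)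
  have := Submodule.finrank_mono hle
  rw [finrank_span_eq_card hLI, Fintype.card_fin] at this
  omega

end SMulComap

section FiniteField

variable {K L : Type*} [Field K] [Field L] [Algebra K L]

theorem sum_natCard_inf_comap_smul [Fintype L] (A : Submodule K L) :
    ∑ α : L, Nat.card ↥(A ⊓ A.comap (α • LinearMap.id)) =
      Nat.card L + (Nat.card A - 1) * Nat.card A := by
  classical
  set P : Finset L := univ.filter (· ∈ A)
  have hP : #P = Nat.card A := by simp [P, Nat.card_eq_fintype_card, Fintype.card_subtype]
  have above (α : L) : Nat.card ↥(A ⊓ A.comap (α • LinearMap.id)) =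
      #(P.bipartiteAbove (fun α x => α * x ∈ A) α) := by
    simp [P, bipartiteAbove, Nat.card_eq_fintype_card, Fintype.card_subtype, filter_filter]
  have below {x : L} (hx : x ≠ 0) :
      #(univ.bipartiteBelow (fun α x => α * x ∈ A) x) = Nat.card A := by
    rw [bipartiteBelow, ← Fintype.card_subtype, Nat.card_eq_fintype_card]
    exact Fintype.card_congr ((Equiv.mulRight₀ x hx).subtypeEquiv fun _ => Iff.rfl)
  have hzero : 0 ∈ P := by simp [P]
  rw [sum_congr rfl fun α _ => above α, sum_card_bipartiteAbove_eq_sum_card_bipartiteBelow,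
    ← add_sum_erase P _ hzero, sum_congr rfl fun x hx => below (ne_of_mem_erase hx),
    sum_const, card_erase_of_mem hzero, hP, smul_eq_mul]
  simp [bipartiteBelow, Nat.card_eq_fintype_card]

theorem exists_sup_comap_smul_ne_top [Fintype K] [FiniteDimensional K L] (A : Submodule K L)
    (hA : finrank K A + 2 ≤ finrank K L) :
    ∃ α ∉ Set.range (algebraMap K L), A ⊔ A.comap (α • LinearMap.id) ≠ ⊤ := by
  classical
  have : Finite L := Module.finite_of_finite K
  have : Fintype L := Fintype.ofFinite L
  by_contra! hsup
  set q := Nat.card K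
  have hq : 2 ≤ q := Finite.one_lt_card
  have hL : Nat.card L = q ^ finrank K L := natCard_eq_pow_finrank
  have hAcard : Nat.card A = q ^ finrank K A := natCard_eq_pow_finrank
  -- for `α ∉ K`, `A ⊔ α⁻¹A = L` forces `|A ∩ α⁻¹A| · |L| = |A|²`
  have bound (α : L) : Nat.card L * Nat.card ↥(A ⊓ A.comap (α • LinearMap.id)) ≤
      (if α ∈ Set.range (algebraMap K L) then Nat.card L * Nat.card A else 0) +
        Nat.card A ^ 2 := by
    split_ifs with hα
    · have := Nat.card_le_card_of_injective _ (Submodule.inclusion_injective (inf_le_left :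
        A ⊓ A.comap (α • LinearMap.id) ≤ A))
      nlinarith
    · have hα0 : α ≠ 0 := fun h => hα ⟨0, by simp [h]⟩
      have hdim := Submodule.finrank_sup_add_finrank_inf_eq A (A.comap (α • LinearMap.id))
      rw [hsup α hα, finrank_top, finrank_comap_smul A hα0] at hdim
      rw [hL, hAcard, natCard_eq_pow_finrank (K := K), ← pow_add, ← pow_mul, zero_add,
        show finrank K L + _ = finrank K A * 2 by omega]
  have hcard_K : #(univ.filter (· ∈ Set.range (algebraMap K L))) = q := by
    rw [Set.filter_mem_univ_eq_toFinset, Set.toFinset_card,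
      Set.card_range_of_injective (algebraMap K L).injective, ← Nat.card_eq_fintype_card]
  have key := sum_le_sum fun α (_ : α ∈ univ) => bound α
  rw [← mul_sum, sum_natCard_inf_comap_smul, sum_add_distrib, sum_ite, sum_const_zero,
    sum_const, sum_const, hcard_K, card_univ, ← Nat.card_eq_fintype_card, smul_eq_mul,
    smul_eq_mul] at key
  have hpow : q ^ 2 * Nat.card A ≤ Nat.card L := by
    rw [hL, hAcard, ← pow_add]
    exact Nat.pow_le_pow_right (by omega) (by omega)
  obtain ⟨B, hB⟩ : ∃ B, Nat.card A = B + 1 := Nat.exists_eq_add_one.mpr Nat.card_pos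
  rw [hB, Nat.add_sub_cancel] at key
  rw [hB] at hpow
  have : Nat.card L + B * (B + 1) ≤ q * (B + 1) + (B + 1) ^ 2 :=
    Nat.le_of_mul_le_mul_left (by linarith) (Nat.card_pos : 0 < Nat.card L)
  nlinarith

end FiniteField

section Scattered

variable {K L V : Type*} [Field K] [Field L] [Algebra K L]
  [AddCommGroup V] [Module L V] [Module K V] [IsScalarTower K L V] {U : Submodule K V}

theorem IsHScattered.disjoint_comap_smul [FiniteDimensional K V] (hU : IsHScattered K L V 1 U)
    {α : L} (hα : α ∉ Set.range (algebraMap K L)) :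
    Disjoint U (U.comap (α • LinearMap.id)) := by
  rw [Submodule.disjoint_def]
  intro y hy hαy
  by_contra hy0
  set S := Submodule.span L {y}
  have hyS : y ∈ S := Submodule.mem_span_singleton_self y
  have hle : Submodule.span K (Set.range ![y, α • y]) ≤ U ⊓ S.restrictScalars K := by
    rw [Submodule.span_le, Set.range_subset_iff, Fin.forall_fin_two]
    exact ⟨⟨hy, hyS⟩, ⟨by simpa using hαy, S.smul_mem α hyS⟩⟩
  have := (Submodule.finrank_mono hle).trans (hU.2 S (finrank_span_singleton hy0))
  rw [finrank_span_eq_card (linearIndependent_pair_smul hy0 hα)] at this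
  simp at this

theorem IsHScattered.sup_comap_smul_eq_top [FiniteDimensional K V] (hU : IsHScattered K L V 1 U)
    (hdim : 2 * finrank K U = finrank K V) {α : L} (hα : α ∉ Set.range (algebraMap K L)) :
    U ⊔ U.comap (α • LinearMap.id) = ⊤ := by
  have hα0 : α ≠ 0 := fun h => hα ⟨0, by simp [h]⟩
  refine Submodule.eq_top_of_disjoint _ _ ?_ (hU.disjoint_comap_smul hα)
  rw [finrank_comap_smul U hα0]
  omega

theorem IsHScattered.finrank_lt_finrank_map_add_two [Fintype K] [FiniteDimensional K L]
    [FiniteDimensional L V] (hU : IsHScattered K L V 1 U) (hdim : 2 * finrank K U = finrank K V)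
    {f : Dual L V} (hf : f ≠ 0) : finrank K L < finrank K (U.map (f.restrictScalars K)) + 2 := by
  have : FiniteDimensional K V := Module.Finite.trans L V
  by_contra! h
  obtain ⟨α, hα, hne⟩ := exists_sup_comap_smul_ne_top _ h
  apply hne
  have hmap : (U.comap (α • LinearMap.id)).map (f.restrictScalars K) ≤
      (U.map (f.restrictScalars K)).comap (α • LinearMap.id) := by
    rintro _ ⟨v, hv, rfl⟩
    exact ⟨α • v, hv, by simp⟩
  have hsurj : Function.Surjective (f.restrictScalars K) := f.surjective_of_ne_zero hf
  rw [eq_top_iff, ← LinearMap.range_eq_top.mpr hsurj, LinearMap.range_eq_map,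
    ← hU.sup_comap_smul_eq_top hdim hα, Submodule.map_sup]
  exact sup_le_sup_left hmap _

end Scattered

section DualFamilies

variable {K L M : Type*} [Field K] [Field L] [Algebra K L] [AddCommGroup M] [Module K M]

theorem linearIndependent_algebraMap_comp_dual [FiniteDimensional K M] {ι : Type*}
    {g : ι → Dual K M} (hg : LinearIndependent K g) :
    LinearIndependent L fun i => Algebra.linearMap K L ∘ₗ g i := by
  let b := Module.finBasis K M
  have hcoord : LinearIndependent L fun i => algebraMap K L ∘ (b.constr K).symm (g i) :=
    linearIndependent_algebraMap_comp_iff.mpr (hg.map' _ (b.constr K).symm.ker)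
  have hconstr : ((b.constr L).toLinearMap ∘ fun i => algebraMap K L ∘ (b.constr K).symm (g i)) =
      fun i => Algebra.linearMap K L ∘ₗ g i :=
    funext fun i => b.ext fun j => by simp
  exact hconstr ▸ hcoord.map' _ (b.constr L).ker

theorem span_algebraMap_comp_dual_eq_top [FiniteDimensional K M] :
    Submodule.span L (Set.range fun g : Dual K M => Algebra.linearMap K L ∘ₗ g) = ⊤ := by
  let b := Module.finBasis K M
  have hspan := (linearIndependent_algebraMap_comp_dual (L := L) b.dualBasis.linearIndependent)
    |>.span_eq_top_of_card_eq_finrank' (by simp [finrank_linearMap_self])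
  exact top_le_iff.mp (hspan ▸ Submodule.span_mono (Set.range_subset_iff.mpr fun i => ⟨_, rfl⟩))

theorem finrank_range_le_of_mem_span {m : ℕ} {g : Fin m → Dual K M} {f : M →ₗ[K] L}
    (hf : f ∈ Submodule.span L (Set.range fun i => Algebra.linearMap K L ∘ₗ g i)) :
    finrank K (LinearMap.range f) ≤ m := by
  obtain ⟨c, rfl⟩ := (Submodule.mem_span_range_iff_exists_fun L).mp hf
  have := FiniteDimensional.span_of_finite K (Set.finite_range c)
  refine (Submodule.finrank_mono ?_).trans ((finrank_range_le_card (R := K) c).trans (by simp))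
  rintro _ ⟨u, rfl⟩
  simp only [LinearMap.coe_sum, Finset.sum_apply, LinearMap.smul_apply, LinearMap.comp_apply,
    Algebra.linearMap_apply, smul_eq_mul]
  refine Submodule.sum_mem _ fun i _ => ?_
  rw [mul_comm, ← Algebra.smul_def]
  exact Submodule.smul_mem _ _ (Submodule.subset_span (Set.mem_range_self i))

end DualFamilies

theorem exists_linearMap_surjective_ker_eq {L H W : Type*} [Field L] [AddCommGroup H]
    [Module L H] [AddCommGroup W] [Module L W] [FiniteDimensional L H] [FiniteDimensional L W]
    (E : Submodule L H) (hdim : finrank L E + finrank L W = finrank L H) :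
    ∃ ℓ : H →ₗ[L] W, Function.Surjective ℓ ∧ LinearMap.ker ℓ = E := by
  have hquot := Submodule.finrank_quotient_add_finrank E
  let e := LinearEquiv.ofFinrankEq (H ⧸ E) W (by omega : finrank L (H ⧸ E) = finrank L W)
  exact ⟨e.toLinearMap ∘ₗ E.mkQ, e.surjective.comp E.mkQ_surjective,
    by rw [LinearEquiv.ker_comp, Submodule.ker_mkQ]⟩

section RestrictDual

variable {K L V : Type*} [Field K] [Field L] [Algebra K L]
  [AddCommGroup V] [Module L V] [Module K V] [IsScalarTower K L V] {U : Submodule K V}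

variable (L) in
@[simps]
def Submodule.restrictDual (U : Submodule K V) : Dual L V →ₗ[L] (U →ₗ[K] L) where
  toFun f := f.restrictScalars K ∘ₗ U.subtype
  map_add' _ _ := rfl
  map_smul' _ _ := rfl

theorem Submodule.restrictDual_injective (hU : Submodule.span L (U : Set V) = ⊤) :
    Function.Injective (U.restrictDual L) := by
  rw [injective_iff_map_eq_zero]
  intro f hf
  exact LinearMap.ext_on hU fun u hu => LinearMap.congr_fun hf ⟨u, hu⟩

theorem IsHScattered.disjoint_span_range_restrictDual [Fintype K] [FiniteDimensional K L]
    [FiniteDimensional L V] (hU : IsHScattered K L V 1 U) (hdim : 2 * finrank K U = finrank K V)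
    {m : ℕ} (hm : m + 2 ≤ finrank K L) (g : Fin m → Dual K U) :
    Disjoint (Submodule.span L (Set.range fun i => Algebra.linearMap K L ∘ₗ g i))
      (LinearMap.range (U.restrictDual L)) := by
  rw [Submodule.disjoint_def]
  rintro _ hspan ⟨f, rfl⟩
  by_contra hne
  have hf : f ≠ 0 := by rintro rfl; exact hne (map_zero _)
  have hlt := hU.finrank_lt_finrank_map_add_two hdim hf
  have hle := finrank_range_le_of_mem_span hspan
  rw [Submodule.restrictDual_apply, LinearMap.range_comp, Submodule.range_subtype] at hle
  omega

end RestrictDual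

section DelsarteDual

variable {K L M W : Type*} [Field K] [Field L] [Algebra K L] [AddCommGroup M] [Module K M]
  [AddCommGroup W] [Module L W] [Module K W] [IsScalarTower K L W]

def delsarteDual (ℓ : (M →ₗ[K] L) →ₗ[L] W) : Submodule K W :=
  LinearMap.range (ℓ.restrictScalars K ∘ₗ LinearMap.compRight K (Algebra.linearMap K L))

theorem span_delsarteDual_eq_top [FiniteDimensional K M] {ℓ : (M →ₗ[K] L) →ₗ[L] W}
    (hℓ : Function.Surjective ℓ) : Submodule.span L (delsarteDual ℓ : Set W) = ⊤ := by
  have hset : (delsarteDual ℓ : Set W) =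
      ℓ '' Set.range fun g : Dual K M => Algebra.linearMap K L ∘ₗ g := by
    rw [delsarteDual, LinearMap.coe_range, ← Set.range_comp]
    rfl
  rw [hset, Submodule.span_image, span_algebraMap_comp_dual_eq_top, Submodule.map_top,
    LinearMap.range_eq_top.mpr hℓ]

end DelsarteDual

section DelsarteDualOfScattered

variable {K L V W : Type*} [Field K] [Fintype K] [Field L] [Algebra K L] [FiniteDimensional K L]
  [AddCommGroup V] [Module L V] [Module K V] [IsScalarTower K L V] [FiniteDimensional L V]
  [AddCommGroup W] [Module L W] {U : Submodule K V} {ℓ : (U →ₗ[K] L) →ₗ[L] W}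

theorem IsHScattered.linearIndependent_comp_algebraMap_comp (hU : IsHScattered K L V 1 U)
    (hdim : 2 * finrank K U = finrank K V)
    (hker : LinearMap.ker ℓ = LinearMap.range (U.restrictDual L)) {m : ℕ}
    (hm : m + 2 ≤ finrank K L) {g : Fin m → Dual K U} (hg : LinearIndependent K g) :
    LinearIndependent L fun i => ℓ (Algebra.linearMap K L ∘ₗ g i) := by
  have : FiniteDimensional K V := Module.Finite.trans L V
  have hdisj := hU.disjoint_span_range_restrictDual hdim hm g
  rw [← hker] at hdisj
  exact (linearIndependent_algebraMap_comp_dual (L := L) hg).map hdisj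

variable [Module K W] [IsScalarTower K L W]

theorem IsHScattered.finrank_delsarteDual (hU : IsHScattered K L V 1 U)
    (hdim : 2 * finrank K U = finrank K V)
    (hker : LinearMap.ker ℓ = LinearMap.range (U.restrictDual L)) (hn : 3 ≤ finrank K L) :
    finrank K (delsarteDual ℓ) = finrank K U := by
  rw [delsarteDual, LinearMap.finrank_range_of_inj, Subspace.dual_finrank_eq]
  refine (injective_iff_map_eq_zero _).mpr ?_
  intro g hg
  by_contra hg0
  have := hU.linearIndependent_comp_algebraMap_comp hdim hker (m := 1) hn
    ((linearIndependent_unique_iff (v := fun _ : Fin 1 => g)).mpr hg0)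
  exact this.ne_zero 0 hg

theorem IsHScattered.isHScattered_delsarteDual [FiniteDimensional L W]
    (hU : IsHScattered K L V 1 U) (hdim : 2 * finrank K U = finrank K V)
    (hker : LinearMap.ker ℓ = LinearMap.range (U.restrictDual L)) (hℓ : Function.Surjective ℓ)
    (hn : 3 ≤ finrank K L) : IsHScattered K L W (finrank K L - 3) (delsarteDual ℓ) := by
  have : FiniteDimensional K V := Module.Finite.trans L V
  refine ⟨span_delsarteDual_eq_top hℓ, fun S hS => finrank_inf_restrictScalars_le ?_ S hS⟩
  intro v hv hvK
  choose g hg using hv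
  have hv : (fun i => ℓ (Algebra.linearMap K L ∘ₗ g i)) = v := funext hg
  rw [← hv] at hvK ⊢
  exact hU.linearIndependent_comp_algebraMap_comp hdim hker (by omega)
    (LinearIndependent.of_comp
      (ℓ.restrictScalars K ∘ₗ LinearMap.compRight K (Algebra.linearMap K L)) hvK)

end DelsarteDualOfScattered

theorem stmt10_general (n r : ℕ) (K L V₀ V : Type*) [Field K] [Fintype K] [Field L] [Algebra K L]
    [AddCommGroup V₀] [Module L V₀] [Module K V₀] [IsScalarTower K L V₀]
    [AddCommGroup V] [Module L V] [Module K V] [IsScalarTower K L V]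
    [FiniteDimensional K L] [FiniteDimensional L V₀] [FiniteDimensional L V]
    (hn : Module.finrank K L = n) (hn4 : 4 ≤ n)
    (hV₀ : Module.finrank L V₀ = r)
    (U₀ : Submodule K V₀) (hU₀ : IsHScattered K L V₀ 1 U₀)
    (hU₀dim : 2 * Module.finrank K ↥U₀ = r * n)
    (hV : Module.finrank L V = r * (n - 2) / 2) :
    ∃ U : Submodule K V, IsHScattered K L V (n - 3) U ∧
      2 * Module.finrank K ↥U = r * n := by
  have : FiniteDimensional K V₀ := Module.Finite.trans L V₀
  have hdim : 2 * finrank K U₀ = finrank K V₀ := by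
    rw [← finrank_mul_finrank K L V₀, hn, hV₀, hU₀dim, mul_comm]
  have hdims : finrank L (LinearMap.range (U₀.restrictDual L)) + finrank L V =
      finrank L (U₀ →ₗ[K] L) := by
    rw [LinearMap.finrank_range_of_inj (U₀.restrictDual_injective hU₀.1), Subspace.dual_finrank_eq,
      finrank_linearMap_self, hV₀, hV, Nat.mul_sub, mul_comm r 2]
    have h2r : 2 * r ≤ r * n := by nlinarith
    generalize r * n = N at *
    omega
  obtain ⟨ℓ, hℓ, hker⟩ := exists_linearMap_surjective_ker_eq _ hdims
  refine ⟨delsarteDual ℓ, hn ▸ hU₀.isHScattered_delsarteDual hdim hker hℓ (by omega), ?_⟩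
  rw [hU₀.finrank_delsarteDual hdim hker (by omega), hU₀dim]

theorem stmt10 (n r : ℕ) (K L V₀ V : Type*) [Field K] [Fintype K] [Field L] [Algebra K L]
    [AddCommGroup V₀] [Module L V₀] [Module K V₀] [IsScalarTower K L V₀]
    [AddCommGroup V] [Module L V] [Module K V] [IsScalarTower K L V]
    [FiniteDimensional K L] [FiniteDimensional L V₀] [FiniteDimensional L V]
    (hn : Module.finrank K L = n) (hn4 : 4 ≤ n) (hr2 : 2 ≤ r) (heven : 2 ∣ r * n)
    (hV₀ : Module.finrank L V₀ = r)
    (U₀ : Submodule K V₀) (hU₀ : IsHScattered K L V₀ 1 U₀)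
    (hU₀dim : 2 * Module.finrank K ↥U₀ = r * n)
    (hV : Module.finrank L V = r * (n - 2) / 2) :
    ∃ U : Submodule K V, IsHScattered K L V (n - 3) U ∧
      2 * Module.finrank K ↥U = r * n :=
  stmt10_general n r K L V₀ V hn hn4 hV₀ U₀ hU₀ hU₀dim hV
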